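/- For every w ∈ F_n with exponent sum σ and every s ∈ ℤ: Φ_s([φ(w)]_F) = [φ(Φ_{ε_y s}(w))]_F, Φ_s([φ⁻¹(w)]_F) = [φ⁻¹(Φ_{ε_y s}(w))]_F, and ([φ(w)]_F)⁻¹ = Φ_{σ d}([φ(w⁻¹)]_F). -/

import Mathlib

/-! Inside `G`, `Φ_t` is conjugation by `yᵗ`. Since `φ` and `φ⁻¹` both send `y^{ε_y s}` to `yˢ`,
they intertwine `Φ_{ε_y s}` with `Φ_s` on free components. For the third identity, the free
component of `g⁻¹` is `Φ_{-t}(g₁⁻¹)` where `t` is the `ℤ`-component of `g`; for `g = φ(w)` this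
`t` is `σ d`, because every `xᵢ` is conjugate to `x₀` and `ℤ` is abelian. -/

/-- The shift automorphism `Φ_s` of the free group `F_n`, sending `x_i` to `x_{[i-s]}`
(indices read modulo `n`). -/
def Phi (n : ℕ) [NeZero n] (s : ℤ) : FreeGroup (Fin n) ≃* FreeGroup (Fin n) :=
  FreeGroup.freeGroupCongr (Equiv.subRight (Fin.intCast s : Fin n))

/-- The action of `ℤ` on `F_n` by shifting: `t` acts as `Φ_t`. -/
def shiftAction (n : ℕ) [NeZero n] : Multiplicative ℤ →* MulAut (FreeGroup (Fin n)) :=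
  zpowersHom (MulAut (FreeGroup (Fin n))) (Phi n 1)

/-- The group `G = F_n ⋊ ℤ`, in which `y⁻¹ xᵢ y = x_{[i+1]}`.  Every element is uniquely
`g₁ yᵗ` with `g₁ ∈ F_n` (the free component, `SemidirectProduct.left`) and `t ∈ ℤ`. -/
abbrev GSD (n : ℕ) [NeZero n] :=
  SemidirectProduct (FreeGroup (Fin n)) (Multiplicative ℤ) (shiftAction n)

/-- The embedding of the free component `F_n` into `G`. -/
def fg (n : ℕ) [NeZero n] (w : FreeGroup (Fin n)) : GSD n := SemidirectProduct.inl w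

/-- The generator `x_i` of `G`. -/
def xg (n : ℕ) [NeZero n] (i : Fin n) : GSD n := fg n (FreeGroup.of i)

/-- The generator `y` of `G`. -/
def yg (n : ℕ) [NeZero n] : GSD n := SemidirectProduct.inr (Multiplicative.ofAdd 1)

/-- The exponent sum of an element of the free group: image under the homomorphism
sending every generator to `1 ∈ ℤ`. -/
def expSum (n : ℕ) (w : FreeGroup (Fin n)) : ℤ :=
  Multiplicative.toAdd (FreeGroup.lift (fun _ => Multiplicative.ofAdd (1 : ℤ)) w)

open scoped Fin.CommRing

namespace GSD

variable {n : ℕ} [NeZero n]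

lemma Phi_of (s : ℤ) (i : Fin n) : Phi n s (FreeGroup.of i) = FreeGroup.of (i - s) := rfl

lemma Phi_zero : Phi n 0 = 1 :=
  MulEquiv.toMonoidHom_injective <| FreeGroup.ext_hom _ _ fun i => by simp [Phi_of]

lemma Phi_add (a b : ℤ) : Phi n (a + b) = Phi n a * Phi n b :=
  MulEquiv.toMonoidHom_injective <| FreeGroup.ext_hom _ _ fun i => by
    simp only [MulEquiv.coe_toMonoidHom, MulAut.mul_apply, Phi_of, Int.cast_add, sub_sub,
      add_comm]

lemma Phi_one_zpow (t : ℤ) : Phi n 1 ^ t = Phi n t := by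
  induction t using Int.induction_on with
  | zero => rw [zpow_zero, Phi_zero]
  | succ t ih => rw [zpow_add_one, ih, Phi_add]
  | pred t ih => rw [zpow_sub_one, ih, mul_inv_eq_iff_eq_mul, ← Phi_add, sub_add_cancel]

lemma shiftAction_ofAdd (t : ℤ) : shiftAction n (Multiplicative.ofAdd t) = Phi n t := by
  rw [shiftAction, zpowersHom_apply, toAdd_ofAdd, Phi_one_zpow]

lemma yg_zpow (t : ℤ) : yg n ^ t = SemidirectProduct.inr (Multiplicative.ofAdd t) := by
  rw [yg, ← map_zpow, ← ofAdd_zsmul, smul_eq_mul, mul_one]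

lemma fg_Phi (t : ℤ) (w : FreeGroup (Fin n)) :
    fg n (Phi n t w) = yg n ^ t * fg n w * (yg n ^ t)⁻¹ := by
  rw [yg_zpow, fg, fg, ← shiftAction_ofAdd, SemidirectProduct.inl_aut, map_inv]

lemma left_conj_yg_zpow (t : ℤ) (g : GSD n) :
    (yg n ^ t * g * (yg n ^ t)⁻¹).left = Phi n t g.left := by
  simp [yg_zpow, SemidirectProduct.mul_left, shiftAction_ofAdd]

lemma inv_left_eq_Phi (g : GSD n) :
    g.left⁻¹ = Phi n (Multiplicative.toAdd g.right) g⁻¹.left := by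
  rw [SemidirectProduct.inv_left, ← MulAut.mul_apply, ← ofAdd_toAdd g.right⁻¹,
    shiftAction_ofAdd, ← Phi_add, toAdd_inv, add_neg_cancel, Phi_zero, MulAut.one_apply]

lemma xg_eq_conj (i : Fin n) :
    xg n i = yg n ^ (-(i : ℤ)) * xg n 0 * (yg n ^ (-(i : ℤ)))⁻¹ := by
  rw [xg, xg, ← fg_Phi, Phi_of]
  simp

variable {F : Type*} [FunLike F (GSD n) (GSD n)] [MonoidHomClass F (GSD n) (GSD n)]

lemma left_map_fg_Phi (ψ : F) {t s : ℤ} (h : ψ (yg n ^ t) = yg n ^ s)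
    (w : FreeGroup (Fin n)) : (ψ (fg n (Phi n t w))).left = Phi n s (ψ (fg n w)).left := by
  rw [fg_Phi, map_mul, map_mul, map_inv, h, left_conj_yg_zpow]

lemma right_map_fg (ψ : F) {d : ℤ} (h : (ψ (xg n 0)).right = Multiplicative.ofAdd d)
    (w : FreeGroup (Fin n)) : (ψ (fg n w)).right = Multiplicative.ofAdd (expSum n w * d) := by
  have hom_eq :
      SemidirectProduct.rightHom.comp ((ψ : GSD n →* GSD n).comp SemidirectProduct.inl) =
      (zpowersHom (Multiplicative ℤ) (Multiplicative.ofAdd d)).comp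
        (FreeGroup.lift fun _ => Multiplicative.ofAdd (1 : ℤ)) := by
    refine FreeGroup.ext_hom _ _ fun i => ?_
    have hi := congrArg (fun g => SemidirectProduct.rightHom (ψ g)) (xg_eq_conj i)
    simp only [map_mul, map_inv, mul_inv_cancel_comm, SemidirectProduct.rightHom_eq_right] at hi
    change (ψ (xg n i)).right = Multiplicative.ofAdd d ^ (1 : ℤ)
    rw [hi, h, zpow_one]
  calc (ψ (fg n w)).right = Multiplicative.ofAdd d ^ expSum n w := DFunLike.congr_fun hom_eq w
    _ = _ := by rw [← ofAdd_zsmul, smul_eq_mul, mul_comm]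

end GSD

open GSD in
theorem statement_10_general (n : ℕ) [NeZero n] (εx εy d : ℤ)
    (hεy : εy = 1 ∨ εy = -1)
    (φ : GSD n ≃* GSD n) (hφx : φ (xg n 0) = xg n 0 ^ εx * yg n ^ d)
    (hφy : φ (yg n) = yg n ^ εy) (w : FreeGroup (Fin n)) (s : ℤ) :
    Phi n s ((φ (fg n w)).left) = (φ (fg n (Phi n (εy * s) w))).left ∧
    Phi n s ((φ.symm (fg n w)).left) = (φ.symm (fg n (Phi n (εy * s) w))).left ∧
    ((φ (fg n w)).left)⁻¹ = Phi n (expSum n w * d) ((φ ((fg n w)⁻¹)).left) := by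
  have hφy_zpow (t : ℤ) : φ (yg n ^ t) = yg n ^ (εy * t) := by
    rw [map_zpow, hφy, ← zpow_mul]
  have hεy_sq : εy * (εy * s) = s := by rcases hεy with rfl | rfl <;> ring
  have hφ : φ (yg n ^ (εy * s)) = yg n ^ s := by rw [hφy_zpow, hεy_sq]
  have hφ_symm : φ.symm (yg n ^ (εy * s)) = yg n ^ s := by
    rw [MulEquiv.symm_apply_eq, hφy_zpow]
  have hφx_right : (φ (xg n 0)).right = Multiplicative.ofAdd d := by
    rw [hφx, yg_zpow, ← SemidirectProduct.rightHom_eq_right, map_mul, map_zpow, xg, fg,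
      SemidirectProduct.rightHom_inl, one_zpow, one_mul, SemidirectProduct.rightHom_inr]
  refine ⟨?_, ?_, ?_⟩
  · exact (left_map_fg_Phi φ hφ w).symm
  · exact (left_map_fg_Phi φ.symm hφ_symm w).symm
  · rw [inv_left_eq_Phi, map_inv, right_map_fg φ hφx_right w, toAdd_ofAdd]

/-- For every `w ∈ F_n` with exponent sum `σ` and every `s ∈ ℤ`:
`Φ_s([φ(w)]_F) = [φ(Φ_{ε_y s}(w))]_F`, `Φ_s([φ⁻¹(w)]_F) = [φ⁻¹(Φ_{ε_y s}(w))]_F`, and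
`([φ(w)]_F)⁻¹ = Φ_{σ d}([φ(w⁻¹)]_F)`. -/
theorem statement_10 (n : ℕ) (hn : 2 ≤ n) [NeZero n] (εx εy d : ℤ)
    (hεx : εx = 1 ∨ εx = -1) (hεy : εy = 1 ∨ εy = -1)
    (φ : GSD n ≃* GSD n) (hφx : φ (xg n 0) = xg n 0 ^ εx * yg n ^ d)
    (hφy : φ (yg n) = yg n ^ εy) (w : FreeGroup (Fin n)) (s : ℤ) :
    Phi n s ((φ (fg n w)).left) = (φ (fg n (Phi n (εy * s) w))).left ∧
    Phi n s ((φ.symm (fg n w)).left) = (φ.symm (fg n (Phi n (εy * s) w))).left ∧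
    ((φ (fg n w)).left)⁻¹ = Phi n (expSum n w * d) ((φ ((fg n w)⁻¹)).left) :=
  statement_10_general n εx εy d hεy φ hφx hφy w s
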